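/- If A and E are closed subsets of Φ⁺ with α_i ∈ E ⊆ {α_i} ∪ r_i(A), then E ⊆ s_i * A, where s_i * A = {α_i} ∪ {β : β−α_i ∈ A if (α_i,β)=1; β ∈ A if (α_i,β)=0; β, β+α_i ∈ A if (α_i,β)=−1}. -/
import Mathlib


/-- The fundamental root `α_i`, written in coordinates with respect to the basis of
fundamental roots. -/
def esingle {n : ℕ} (i : Fin n) : Fin n → ℤ := Pi.single i 1

/-- A finite crystallographic simply-laced root system (type `A`, `D` or `E`),
given by the Gram matrix `C` of the fundamental roots `α_1, …, α_n` (all of squared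
length 2):  `C i j = (α_i, α_j)`, which is `2` on the diagonal and `0` or `-1` off
the diagonal, and is positive definite.  Roots are coordinatized in the root
lattice `ℤⁿ`; the inner product is `ip`, and the positive roots are exactly the
lattice vectors of squared length `2` with nonnegative coordinates. -/
structure ADE (n : ℕ) where
  C : Matrix (Fin n) (Fin n) ℤ
  symm : ∀ i j, C i j = C j i
  diag : ∀ i, C i i = 2
  offdiag : ∀ i j, i ≠ j → C i j = 0 ∨ C i j = -1
  posdef : ∀ v : Fin n → ℤ, v ≠ 0 → 0 < ∑ i, ∑ j, v i * C i j * v j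

namespace ADE

variable {n : ℕ}

/-- The inner product `( , )` on the root lattice. -/
def ip (X : ADE n) (v w : Fin n → ℤ) : ℤ := ∑ i, ∑ j, v i * X.C i j * w j

/-- The set `Φ⁺` of positive roots: the lattice vectors of squared length `2`
all of whose coordinates (with respect to the fundamental roots) are nonnegative. -/
def Pos (X : ADE n) : Set (Fin n → ℤ) :=
  {β | β ≠ 0 ∧ (∀ j, 0 ≤ β j) ∧ X.ip β β = 2}

/-- The height `ht(β)`: the sum of the coefficients of `β` with respect to the
fundamental roots. -/
def htZ (β : Fin n → ℤ) : ℤ := ∑ j, β j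

end ADE

namespace ADE

variable {n : ℕ}

/-- A subset `A ⊆ Φ⁺` is closed if `α, β ∈ A` and `α + β ∈ Φ⁺` imply `α + β ∈ A`. -/
def IsClosedSub (X : ADE n) (A : Set (Fin n → ℤ)) : Prop :=
  A ⊆ X.Pos ∧ ∀ a ∈ A, ∀ b ∈ A, a + b ∈ X.Pos → a + b ∈ A

/-- The fundamental reflection `r_k : v ↦ v - (α_k, v) α_k`. -/
def srefl (X : ADE n) (k : Fin n) (v : Fin n → ℤ) : Fin n → ℤ :=
  v - X.ip (esingle k) v • esingle k

/-- The action `s_k * A` of the Artin generator `s_k` on subsets of `Φ⁺`: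
`s_k * A = {α_k} ∪ {β ∈ Φ⁺ : β - α_k ∈ A if (α_k,β) = 1; β ∈ A if (α_k,β) = 0;
β ∈ A and β + α_k ∈ A if (α_k,β) = -1}`. -/
def skStar (X : ADE n) (k : Fin n) (A : Set (Fin n → ℤ)) : Set (Fin n → ℤ) :=
  {esingle k} ∪
    {β | β ∈ X.Pos ∧
      ((X.ip (esingle k) β = 1 ∧ β - esingle k ∈ A) ∨
       (X.ip (esingle k) β = 0 ∧ β ∈ A) ∨
       (X.ip (esingle k) β = -1 ∧ β ∈ A ∧ β + esingle k ∈ A))}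

end ADE

namespace ADE

variable {n : ℕ}

lemma ip_add_left (X : ADE n) (u v w : Fin n → ℤ) :
    X.ip (u + v) w = X.ip u w + X.ip v w := by
  simp [ADE.ip, add_mul, Finset.sum_add_distrib]

lemma ip_add_right (X : ADE n) (u v w : Fin n → ℤ) :
    X.ip u (v + w) = X.ip u v + X.ip u w := by
  simp [ADE.ip, mul_add, Finset.sum_add_distrib]

lemma ip_smul_left (X : ADE n) (c : ℤ) (u v : Fin n → ℤ) :
    X.ip (c • u) v = c * X.ip u v := by
  simp only [ADE.ip, Pi.smul_apply, smul_eq_mul, Finset.mul_sum]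
  refine Finset.sum_congr rfl fun i _ => Finset.sum_congr rfl fun j _ => by ring

lemma ip_smul_right (X : ADE n) (c : ℤ) (u v : Fin n → ℤ) :
    X.ip u (c • v) = c * X.ip u v := by
  simp only [ADE.ip, Pi.smul_apply, smul_eq_mul, Finset.mul_sum]
  refine Finset.sum_congr rfl fun i _ => Finset.sum_congr rfl fun j _ => by ring

lemma ip_sub_left (X : ADE n) (u v w : Fin n → ℤ) :
    X.ip (u - v) w = X.ip u w - X.ip v w := by
  have := X.ip_add_left (u - v) v w
  simp at this; linarith

lemma ip_sub_right (X : ADE n) (u v w : Fin n → ℤ) :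
    X.ip u (v - w) = X.ip u v - X.ip u w := by
  have := X.ip_add_right u (v - w) w
  simp at this; linarith

lemma ip_comm (X : ADE n) (u v : Fin n → ℤ) : X.ip u v = X.ip v u := by
  unfold ADE.ip
  rw [Finset.sum_comm]
  refine Finset.sum_congr rfl fun j _ => Finset.sum_congr rfl fun i _ => ?_
  rw [X.symm j i]; ring

lemma ip_single_left (X : ADE n) (i : Fin n) (v : Fin n → ℤ) :
    X.ip (esingle i) v = ∑ j, X.C i j * v j := by
  unfold ADE.ip esingle
  rw [Finset.sum_eq_single i]
  · simp
  · intro b _ hb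
    simp [Pi.single_apply, hb]
  · simp

lemma ip_single_single (X : ADE n) (i : Fin n) :
    X.ip (esingle i) (esingle i) = 2 := by
  rw [ip_single_left]
  rw [Finset.sum_eq_single i]
  · simp [esingle, X.diag]
  · intro b _ hb
    simp [esingle, Pi.single_apply, hb]
  · simp

lemma single_mem_pos (X : ADE n) (i : Fin n) : esingle i ∈ X.Pos := by
  refine ⟨?_, ?_, X.ip_single_single i⟩
  · intro h
    have := congrFun h i
    simp [esingle] at this
  · intro j
    simp only [esingle, Pi.single_apply]
    split <;> norm_num

lemma pos_nonzero_coord (X : ADE n) {u : Fin n → ℤ} (hu : u ∈ X.Pos) :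
    ∃ j, 0 < u j := by
  by_contra h
  push_neg at h
  exact hu.1 (funext fun j => le_antisymm (h j) (hu.2.1 j))

lemma ip_lt_two (X : ADE n) {u v : Fin n → ℤ} (hu : u ∈ X.Pos) (hv : v ∈ X.Pos)
    (hne : u ≠ v) : X.ip u v < 2 := by
  have h : 0 < X.ip (u - v) (u - v) := X.posdef _ (sub_ne_zero.mpr hne)
  rw [ip_sub_left, ip_sub_right, ip_sub_right, hu.2.2, hv.2.2, X.ip_comm v u] at h
  linarith

lemma neg_two_lt_ip (X : ADE n) {u v : Fin n → ℤ} (hu : u ∈ X.Pos) (hv : v ∈ X.Pos) :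
    -2 < X.ip u v := by
  obtain ⟨j, hj⟩ := X.pos_nonzero_coord hu
  have hne : u + v ≠ 0 := by
    intro h
    have := congrFun h j
    have := hv.2.1 j
    simp [Pi.add_apply] at *
    omega
  have h : 0 < X.ip (u + v) (u + v) := X.posdef _ hne
  rw [ip_add_left, ip_add_right, ip_add_right, hu.2.2, hv.2.2, X.ip_comm v u] at h
  linarith

lemma ip_single_srefl (X : ADE n) (i : Fin n) (a : Fin n → ℤ) :
    X.ip (esingle i) (X.srefl i a) = -X.ip (esingle i) a := by
  unfold ADE.srefl
  rw [ip_sub_right, ip_smul_right, X.ip_single_single]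
  ring

end ADE

/-- If `A` and `E` are closed subsets of `Φ⁺` with `α_i ∈ E ⊆ {α_i} ∪ r_i(A)`,
then `E ⊆ s_i * A`. -/
theorem subset_skStar_of_closed {n : ℕ} (X : ADE n) (i : Fin n)
    (A E : Set (Fin n → ℤ)) (hA : X.IsClosedSub A) (hE : X.IsClosedSub E)
    (hi : esingle i ∈ E) (hsub : E ⊆ {esingle i} ∪ (X.srefl i '' A)) :
    E ⊆ X.skStar i A := by
  intro β hβ
  by_cases hβe : β = esingle i
  · exact Or.inl hβe
  have hβP : β ∈ X.Pos := hE.1 hβ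
  have heP : esingle i ∈ X.Pos := X.single_mem_pos i
  have hβim : β ∈ X.srefl i '' A := by
    rcases hsub hβ with h | h
    · exact absurd h hβe
    · exact h
  obtain ⟨a, haA, hra⟩ := hβim
  have hdlt : X.ip (esingle i) β < 2 := X.ip_lt_two heP hβP (Ne.symm hβe)
  have hdgt : -2 < X.ip (esingle i) β := X.neg_two_lt_ip heP hβP
  have hda : X.ip (esingle i) β = - X.ip (esingle i) a := by
    rw [← hra, X.ip_single_srefl]
  have haβ : a = β + X.ip (esingle i) a • esingle i := by
    rw [← hra]
    unfold ADE.srefl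
    abel
  have htri : X.ip (esingle i) β = -1 ∨ X.ip (esingle i) β = 0 ∨
      X.ip (esingle i) β = 1 := by omega
  rcases htri with h | h | h
  · -- (α_i, β) = -1 : then a = β + α_i ∈ A; must show β ∈ A as well
    have hca : X.ip (esingle i) a = 1 := by omega
    rw [hca, one_smul] at haβ
    have haP : a ∈ X.Pos := hA.1 haA
    have hβeE : β + esingle i ∈ E := by
      refine hE.2 β hβ (esingle i) hi ?_
      rw [← haβ]; exact haP
    have hβA : β ∈ A := by
      rcases hsub hβeE with h' | ⟨a', ha'A, hra'⟩
      · exfalso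
        have : β = 0 := by
          have h0 : β + esingle i = esingle i := h'
          have := congrArg (fun v => v - esingle i) h0
          simpa using this
        exact hβP.1 this
      · have h1 : X.ip (esingle i) a' = -1 := by
          have h2 := X.ip_single_srefl i a'
          rw [hra', X.ip_add_right, X.ip_single_single, h] at h2
          omega
        have ha'β : a' = β := by
          have h3 : β + esingle i = a' + esingle i := by
            rw [← hra']
            unfold ADE.srefl
            rw [h1, neg_one_zsmul]
            abel
          exact add_right_cancel h3.symm
        rw [← ha'β]; exact ha'A
    exact Or.inr ⟨hβP, Or.inr (Or.inr ⟨h, hβA, haβ ▸ haA⟩)⟩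
  · -- (α_i, β) = 0 : then a = β
    have hca : X.ip (esingle i) a = 0 := by omega
    rw [hca, zero_smul, add_zero] at haβ
    exact Or.inr ⟨hβP, Or.inr (Or.inl ⟨h, haβ ▸ haA⟩)⟩
  · -- (α_i, β) = 1 : then a = β - α_i
    have hca : X.ip (esingle i) a = -1 := by omega
    rw [hca, neg_one_zsmul] at haβ
    have : β - esingle i ∈ A := by
      have : β - esingle i = a := by rw [haβ]; abel
      rw [this]; exact haA
    exact Or.inr ⟨hβP, Or.inl ⟨h, this⟩⟩
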